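/- arXiv:1603.00898 — 4 statements merged into one kernel-verified Lean document; each statement's English description precedes it below -/
import Mathlib

section
/- Let A be an n×m integer matrix with all entries in {-1, 0, 1} such that each column of A contains at most one entry equal to -1 (the fundamental assumption). Let b, c be integer vectors in {0,1}^n. Suppose x ∈ ℤ^m with x ≥ 0 is a 'relaxed solution', i.e., 0 ≤ Ax + b ≤ c (componentwise). Let y ∈ ℤ^m satisfy 0 ≤ y ≤ x and Ay ≥ 0, and suppose y is maximal in the sense that there is no standard unit vector u with y + u ≤ x and A(y + u) ≥ 0. Then x' := x − y also satisfies 0 ≤ Ax' + b ≤ c, i.e., x' is another relaxed solution. -/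
/-!
Put `z = x - y ≥ 0`. The upper bound is immediate from `A y ≥ 0`. If the lower bound failed in
row `i`, then `(A z) i < 0` forces some `j` with `A i j = -1` and `y j < x j`. By maximality of `y`,
adding the unit vector `e j` to `y` breaks `A y ≥ 0` in some row `i'`; as entries are at least
`-1`, this needs `A i' j = -1` and `(A y) i' = 0`. The column assumption gives `i' = i`, so
`(A z) i + b i = (A x) i + b i ≥ 0`, a contradiction.
-/

open Matrix

theorem add_single_one_le_of_lt {κ : Type*} [DecidableEq κ] {x y : κ → ℤ} (hyx : y ≤ x) {j : κ}
    (hj : y j < x j) : y + Pi.single j 1 ≤ x := by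
  intro k
  rcases eq_or_ne k j with rfl | hk
  · simpa using hj
  · simpa [hk] using hyx k

namespace Matrix

variable {ι κ : Type*} [Fintype κ] (A : Matrix ι κ ℤ)

theorem exists_neg_pos_of_mulVec_neg {z : κ → ℤ} (hz : 0 ≤ z) {i : ι}
    (hi : (A *ᵥ z) i < 0) : ∃ j, A i j < 0 ∧ 0 < z j := by
  obtain ⟨j, -, hj⟩ := Finset.exists_lt_of_sum_lt (s := Finset.univ)
    (f := fun j => A i j * z j) (g := 0) (by simpa [mulVec, dotProduct] using hi)
  have hAij : A i j < 0 := neg_of_mul_neg_left hj (hz j)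
  exact ⟨j, hAij, pos_of_mul_neg_right hj hAij.le⟩

theorem exists_eq_neg_one_of_not_nonneg_mulVec_add_single [DecidableEq κ]
    (hA : ∀ i j, -1 ≤ A i j) {y : κ → ℤ} (hAy : 0 ≤ A *ᵥ y) {j : κ}
    (h : ¬ 0 ≤ A *ᵥ (y + Pi.single j 1)) : ∃ i, A i j = -1 ∧ (A *ᵥ y) i = 0 := by
  obtain ⟨i, hi⟩ : ∃ i, (A *ᵥ y) i + A i j < 0 := by
    simpa [Pi.le_def, mulVec_add] using h
  have hAyi : 0 ≤ (A *ᵥ y) i := hAy i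
  have hAij := hA i j
  exact ⟨i, by omega, by omega⟩

end Matrix

theorem stmt_0_general (n m : ℕ) (A : Matrix (Fin n) (Fin m) ℤ)
    (hA : ∀ i j, A i j = -1 ∨ A i j = 0 ∨ A i j = 1)
    (hcol : ∀ j i i', A i j = -1 → A i' j = -1 → i = i')
    (b c : Fin n → ℤ)
    (hb : ∀ i, b i = 0 ∨ b i = 1)
    (x : Fin m → ℤ)
    (hx1 : 0 ≤ A.mulVec x + b) (hx2 : A.mulVec x + b ≤ c)
    (y : Fin m → ℤ) (hyx : y ≤ x) (hAy : 0 ≤ A.mulVec y)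
    (hmax : ∀ j : Fin m, ¬ (y + Pi.single j 1 ≤ x ∧ 0 ≤ A.mulVec (y + Pi.single j 1))) :
    0 ≤ A.mulVec (x - y) + b ∧ A.mulVec (x - y) + b ≤ c := by
  have hA_ge : ∀ i j, -1 ≤ A i j := fun i j => by rcases hA i j with h | h | h <;> omega
  refine ⟨fun i => ?_, fun i => ?_⟩
  · show 0 ≤ (A *ᵥ (x - y)) i + b i
    have hbi : 0 ≤ b i := by rcases hb i with h | h <;> omega
    rcases le_or_gt 0 ((A *ᵥ (x - y)) i) with hzi | hzi
    · exact add_nonneg hzi hbi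
    obtain ⟨j, hAij, hzj⟩ := A.exists_neg_pos_of_mulVec_neg (sub_nonneg.mpr hyx) hzi
    obtain ⟨i', hAi'j, hAyi'⟩ := A.exists_eq_neg_one_of_not_nonneg_mulVec_add_single hA_ge hAy
      fun h => hmax j ⟨add_single_one_le_of_lt hyx (sub_pos.mp hzj), h⟩
    obtain rfl : i = i' := hcol j i i' (by linarith [hA_ge i j]) hAi'j
    simpa [mulVec_sub, hAyi'] using hx1 i
  · show (A *ᵥ (x - y)) i + b i ≤ c i
    have hAyi : 0 ≤ (A *ᵥ y) i := hAy i
    have hxi : (A *ᵥ x) i + b i ≤ c i := hx2 i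
    rw [mulVec_sub, Pi.sub_apply]
    linarith

theorem stmt_0 (n m : ℕ) (A : Matrix (Fin n) (Fin m) ℤ)
    (hA : ∀ i j, A i j = -1 ∨ A i j = 0 ∨ A i j = 1)
    (hcol : ∀ j i i', A i j = -1 → A i' j = -1 → i = i')
    (b c : Fin n → ℤ)
    (hb : ∀ i, b i = 0 ∨ b i = 1) (hc : ∀ i, c i = 0 ∨ c i = 1)
    (x : Fin m → ℤ) (hx : 0 ≤ x)
    (hx1 : 0 ≤ A.mulVec x + b) (hx2 : A.mulVec x + b ≤ c)
    (y : Fin m → ℤ) (hy0 : 0 ≤ y) (hyx : y ≤ x) (hAy : 0 ≤ A.mulVec y)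
    (hmax : ∀ j : Fin m, ¬ (y + Pi.single j 1 ≤ x ∧ 0 ≤ A.mulVec (y + Pi.single j 1))) :
    0 ≤ A.mulVec (x - y) + b ∧ A.mulVec (x - y) + b ≤ c :=
  stmt_0_general n m A hA hcol b c hb x hx1 hx2 y hyx hAy hmax
end

section
/- Let A be an n×m integer matrix with entries in {-1,0,1} such that each column has at most one -1 entry. Let b ∈ {0,1}^n, c ∈ {0,1}^n, and let x ≥ 0 be an integer vector with 0 ≤ Ax + b ≤ c. Let x_k ∈ ℤ^m satisfy 0 ≤ x_k ≤ x, x_k ≠ x, and 0 ≤ A x_k + b ≤ 1 (componentwise, where 1 is the all-ones vector). If z := x − x_k satisfies (Az)_i ≤ −1 for some index i, then there exists a standard unit vector u ≤ z such that A(x_k + u) + b ≥ 0. -/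
/-!
Since `z = x - xₖ ≥ 0` and `(A z)ᵢ < 0`, some column `j` has `A i j = -1` and `z j ≥ 1`, so `eⱼ ≤ z`.
Adding `eⱼ` to `xₖ` adds column `j` of `A` to `A xₖ + b`. That column is nonnegative outside row `i`,
and in row `i` the slack is at least one: `(A xₖ + b)ᵢ = (A x + b)ᵢ - (A z)ᵢ ≥ 0 + 1`.
-/

namespace Matrix

variable {m n R : Type*} [Fintype n]

theorem exists_neg_and_pos_of_mulVec_neg [Ring R] [LinearOrder R] [IsStrictOrderedRing R]
    (A : Matrix m n R) {z : n → R} (hz : 0 ≤ z) {i : m} (hi : (A *ᵥ z) i < 0) :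
    ∃ j, A i j < 0 ∧ 0 < z j := by
  by_contra! h
  refine hi.not_ge (Finset.sum_nonneg fun j _ => ?_)
  rcases le_or_gt 0 (A i j) with hA | hA
  · exact mul_nonneg hA (hz j)
  · rw [le_antisymm (h j hA) (hz j), mul_zero]

theorem mulVec_add_single_one [DecidableEq n] [NonAssocSemiring R]
    (A : Matrix m n R) (v : n → R) (j : n) :
    A *ᵥ (v + Pi.single j 1) = A *ᵥ v + A.col j := by
  rw [mulVec_add, mulVec_single_one]

end Matrix

theorem Pi.single_one_le_of_one_le {n R : Type*} [DecidableEq n] [Preorder R] [Zero R] [One R]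
    {z : n → R} (hz : 0 ≤ z) {j : n} (hj : 1 ≤ z j) : Pi.single j 1 ≤ z :=
  update_le_iff.2 ⟨hj, fun k _ => hz k⟩

theorem stmt_1_general (n m : ℕ) (A : Matrix (Fin n) (Fin m) ℤ)
    (hA : ∀ i j, A i j = -1 ∨ A i j = 0 ∨ A i j = 1)
    (hcol : ∀ j i i', A i j = -1 → A i' j = -1 → i = i')
    (b : Fin n → ℤ) (x : Fin m → ℤ) (hx1 : 0 ≤ A.mulVec x + b)
    (xk : Fin m → ℤ) (hxkx : xk ≤ x) (hxk1 : 0 ≤ A.mulVec xk + b)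
    (i : Fin n) (hi : A.mulVec (x - xk) i ≤ -1) :
    ∃ j : Fin m, Pi.single j 1 ≤ x - xk ∧
      0 ≤ A.mulVec (xk + Pi.single j 1) + b := by
  obtain ⟨j, hAij_neg, hzj⟩ :=
    A.exists_neg_and_pos_of_mulVec_neg (sub_nonneg.2 hxkx) (hi.trans_lt (by norm_num))
  have hAij : A i j = -1 := by rcases hA i j with h | h | h <;> omega
  have hcolj : ∀ i' ≠ i, 0 ≤ A i' j := fun i' hi' => by
    rcases hA i' j with h | h | h
    · exact absurd (hcol j i' i h hAij) hi'
    all_goals omega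
  have hslack : 1 ≤ (A.mulVec xk + b) i := by
    have := hx1 i
    simp only [Matrix.mulVec_sub, Pi.sub_apply, Pi.add_apply, Pi.zero_apply] at hi this ⊢
    omega
  refine ⟨j, Pi.single_one_le_of_one_le (sub_nonneg.2 hxkx) hzj, fun i' => ?_⟩
  have := hxk1 i'
  simp only [Matrix.mulVec_add_single_one, Pi.add_apply, Pi.zero_apply, Matrix.col_apply]
    at this hslack ⊢
  by_cases hi' : i' = i
  · subst hi'
    omega
  · have := hcolj i' hi'
    omega

theorem stmt_1 (n m : ℕ) (A : Matrix (Fin n) (Fin m) ℤ)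
    (hA : ∀ i j, A i j = -1 ∨ A i j = 0 ∨ A i j = 1)
    (hcol : ∀ j i i', A i j = -1 → A i' j = -1 → i = i')
    (b c : Fin n → ℤ)
    (hb : ∀ i, b i = 0 ∨ b i = 1) (hc : ∀ i, c i = 0 ∨ c i = 1)
    (x : Fin m → ℤ) (hx : 0 ≤ x)
    (hx1 : 0 ≤ A.mulVec x + b) (hx2 : A.mulVec x + b ≤ c)
    (xk : Fin m → ℤ) (hxk0 : 0 ≤ xk) (hxkx : xk ≤ x) (hxkne : xk ≠ x)
    (hxk1 : 0 ≤ A.mulVec xk + b) (hxk2 : A.mulVec xk + b ≤ 1)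
    (i : Fin n) (hi : A.mulVec (x - xk) i ≤ -1) :
    ∃ j : Fin m, Pi.single j 1 ≤ x - xk ∧
      0 ≤ A.mulVec (xk + Pi.single j 1) + b :=
  stmt_1_general n m A hA hcol b x hx1 xk hxkx hxk1 i hi
end

section
/- Let A be an n×m integer matrix with entries in {-1,0,1}, each column having at most one -1 entry; let b, c ∈ {0,1}^n. Suppose x ≥ 0 is an integer vector with 0 ≤ Ax + b ≤ c, and x_k ∈ ℤ^m satisfies 0 ≤ x_k ≤ x, x_k ≠ x, and 0 ≤ A x_k + b ≤ 1. Let u be a standard unit vector with u ≤ x − x_k and A(x_k + u) + b ≥ 0, and suppose the index i satisfies (A x_k + b)_i = 1 and (Au)_i = 1. Then (A(x − x_k − u))_i ≤ −1, and consequently there exists a standard unit vector v ≤ x − x_k − u with (Av)_i = −1 and (A(x_k + v) + b)_i = 0. -/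
/-! Position `i` is full at `xk` and `u` adds one more to it, while `Ax + b ≤ c ≤ 1` there, so
the nonnegative remainder `w = x - xk - u` satisfies `(Aw)ᵢ ≤ -1`. A row times a nonnegative
vector can only be negative through a column where the row is negative and the vector positive;
that column gives `v`. -/

theorem Pi.single_le_of_nonneg {ι α : Type*} [DecidableEq ι] [Preorder α] [Zero α]
    {f : ι → α} {i : ι} {a : α} (hf : 0 ≤ f) (ha : a ≤ f i) : Pi.single i a ≤ f := by
  intro j
  rcases eq_or_ne j i with rfl | hj
  · simpa using ha
  · simpa [hj] using hf j

theorem exists_neg_and_pos_of_dotProduct_neg {ι R : Type*} [Fintype ι] [Ring R] [LinearOrder R]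
    [IsStrictOrderedRing R] {r w : ι → R} (hw : 0 ≤ w) (h : r ⬝ᵥ w < 0) :
    ∃ j, r j < 0 ∧ 0 < w j := by
  obtain ⟨j, -, hj⟩ := Finset.exists_lt_of_sum_lt (s := Finset.univ)
    (f := fun j => r j * w j) (g := 0) (by simpa [dotProduct] using h)
  rcases mul_neg_iff.1 hj with ⟨-, hwj⟩ | hrw
  · exact absurd (hw j) hwj.not_ge
  · exact ⟨j, hrw⟩

theorem stmt_4_general (n m : ℕ) (A : Matrix (Fin n) (Fin m) ℤ)
    (hA : ∀ i j, A i j = -1 ∨ A i j = 0 ∨ A i j = 1)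
    (b c : Fin n → ℤ)
    (hc : ∀ i, c i = 0 ∨ c i = 1)
    (x : Fin m → ℤ)
    (hx2 : A.mulVec x + b ≤ c)
    (xk : Fin m → ℤ)
    (j₀ : Fin m) (hu : Pi.single j₀ (1:ℤ) ≤ x - xk)
    (i : Fin n)
    (hi1 : (A.mulVec xk + b) i = 1)
    (hi2 : A.mulVec (Pi.single j₀ (1:ℤ)) i = 1) :
    A.mulVec (x - xk - Pi.single j₀ 1) i ≤ -1 ∧
    ∃ j : Fin m, Pi.single j 1 ≤ x - xk - Pi.single j₀ 1 ∧
      A.mulVec (Pi.single j 1) i = -1 ∧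
      (A.mulVec (xk + Pi.single j 1) + b) i = 0 := by
  set w := x - xk - Pi.single j₀ 1
  have hw : 0 ≤ w := sub_nonneg.2 hu
  have hAw : A.mulVec w i ≤ -1 := by
    have hsplit : A.mulVec w i
        = (A.mulVec x + b) i - (A.mulVec xk + b) i - A.mulVec (Pi.single j₀ 1) i := by
      simp only [w, Matrix.mulVec_sub, Pi.add_apply, Pi.sub_apply]
      ring
    have hci : c i ≤ 1 := by rcases hc i with h | h <;> omega
    linarith [hx2 i]
  obtain ⟨j, hAj, hwj⟩ :=
    exists_neg_and_pos_of_dotProduct_neg hw (hAw.trans_lt (by norm_num) : A.mulVec w i < 0)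
  have hAij : A.mulVec (Pi.single j 1) i = -1 := by
    rw [Matrix.mulVec_single_one, Matrix.col_apply]
    rcases hA i j with h | h | h <;> omega
  refine ⟨hAw, j, Pi.single_le_of_nonneg hw hwj, hAij, ?_⟩
  rw [Matrix.mulVec_add, add_right_comm, Pi.add_apply, hi1, hAij, add_neg_cancel]

theorem stmt_4 (n m : ℕ) (A : Matrix (Fin n) (Fin m) ℤ)
    (hA : ∀ i j, A i j = -1 ∨ A i j = 0 ∨ A i j = 1)
    (hcol : ∀ j i i', A i j = -1 → A i' j = -1 → i = i')
    (b c : Fin n → ℤ)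
    (hb : ∀ i, b i = 0 ∨ b i = 1) (hc : ∀ i, c i = 0 ∨ c i = 1)
    (x : Fin m → ℤ) (hx : 0 ≤ x)
    (hx1 : 0 ≤ A.mulVec x + b) (hx2 : A.mulVec x + b ≤ c)
    (xk : Fin m → ℤ) (hxk0 : 0 ≤ xk) (hxkx : xk ≤ x) (hxkne : xk ≠ x)
    (hxk1 : 0 ≤ A.mulVec xk + b) (hxk2 : A.mulVec xk + b ≤ 1)
    (j₀ : Fin m) (hu : Pi.single j₀ (1:ℤ) ≤ x - xk)
    (hu0 : 0 ≤ A.mulVec (xk + Pi.single j₀ 1) + b)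
    (i : Fin n)
    (hi1 : (A.mulVec xk + b) i = 1)
    (hi2 : A.mulVec (Pi.single j₀ (1:ℤ)) i = 1) :
    A.mulVec (x - xk - Pi.single j₀ 1) i ≤ -1 ∧
    ∃ j : Fin m, Pi.single j 1 ≤ x - xk - Pi.single j₀ 1 ∧
      A.mulVec (Pi.single j 1) i = -1 ∧
      (A.mulVec (xk + Pi.single j 1) + b) i = 0 :=
  stmt_4_general n m A hA b c hc x hx2 xk j₀ hu i hi1 hi2
end

section
/- Let A be an n×m integer matrix with entries in {-1,0,1}, each column with at most one -1 entry, and b, c ∈ {0,1}^n. Suppose x ≥ 0 is an integer vector with 0 ≤ Ax + b ≤ c, and suppose x_k satisfies 0 ≤ x_k ≤ x, x_k ≠ x, and 0 ≤ A x_k + b ≤ 1. Let U be the set of standard unit vectors u with u ≤ x − x_k and A(x_k + u) + b ≥ 0. Assume U is nonempty but no element u of U satisfies A(x_k + u) + b ≤ 1. Then there exists a nonzero integer vector z with 0 ≤ z ≤ x − x_k and Az ≥ 0. -/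
/-!
An admissible unit vector `e_j` overshoots some row `i` of `A (xk + e_j) + b`; hence `A i j = 1`
and row `i` is tight at `xk`. As `(A x + b) i ≤ 1`, the rest `x - xk - e_j` has a negative `i`-th
row, which exhibits a column `j'` with `A i j' = -1` and `e_j'` admissible. Iterating `j ↦ j'` on
the finite set of admissible columns gives a cycle. In row `i`, every `-1` at a cycle column is
preceded on the cycle by a `+1` (the `-1` of a column sits in a single row), so the indicator
vector `z` of the cycle satisfies `A z ≥ 0`.
-/

open Function Set Matrix

theorem Set.MapsTo.exists_mem_periodicPts {α : Type*} [Finite α] {f : α → α} {s : Set α}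
    (hf : MapsTo f s s) {x : α} (hx : x ∈ s) : ∃ y ∈ s, y ∈ periodicPts f := by
  obtain ⟨a, b, hab, heq⟩ := Finite.exists_ne_map_eq_of_infinite (f^[·] x)
  wlog hlt : a < b generalizing a b
  · exact this b a hab.symm heq.symm (hab.lt_or_gt.resolve_left hlt)
  refine ⟨f^[a] x, hf.iterate a hx, mk_mem_periodicPts (Nat.sub_pos_of_lt hlt) ?_⟩
  rw [IsPeriodicPt, IsFixedPt, ← iterate_add_apply, Nat.sub_add_cancel hlt.le, heq]

theorem Set.MapsTo.bijOn_inter_periodicPts {α : Type*} {f : α → α} {s : Set α}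
    (hf : MapsTo f s s) : BijOn f (s ∩ periodicPts f) (s ∩ periodicPts f) := by
  have hper := bijOn_periodicPts f
  refine ⟨hf.inter_inter hper.mapsTo, hper.injOn.mono inter_subset_right, ?_⟩
  rintro _ ⟨hys, hy⟩
  obtain ⟨x, hx, rfl⟩ := hper.surjOn hy
  obtain ⟨n, hn, hxn⟩ := id hx
  have hx_eq : f^[n - 1] (f x) = x := by
    rw [← iterate_succ_apply, Nat.succ_eq_add_one, Nat.sub_add_cancel hn, hxn.eq]
  exact ⟨x, ⟨hx_eq ▸ hf.iterate _ hys, hx⟩, rfl⟩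

theorem Set.exists_finset_bijOn_of_forall_exists {α : Type*} [Finite α] {s : Set α}
    (hs : s.Nonempty) {r : α → α → Prop} (h : ∀ x ∈ s, ∃ y ∈ s, r x y) :
    ∃ (t : Finset α) (g : α → α), t.Nonempty ∧ ↑t ⊆ s ∧ BijOn g t t ∧ ∀ x ∈ t, r x (g x) := by
  have : Nonempty α := hs.to_subtype.map Subtype.val
  choose! g hgs hgr using h
  replace hgs : MapsTo g s s := hgs
  obtain ⟨x, hx⟩ := hs
  obtain ⟨y, hys, hy⟩ := hgs.exists_mem_periodicPts hx
  refine ⟨(toFinite (s ∩ periodicPts g)).toFinset, g, ⟨y, by simp [hys, hy]⟩, by simp,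
    by simpa using hgs.bijOn_inter_periodicPts, fun z hz => hgr z (by simp_all)⟩

theorem Matrix.exists_neg_entry_of_mulVec_neg {ι κ R : Type*} [Fintype κ] [CommRing R]
    [LinearOrder R] [IsStrictOrderedRing R] {A : Matrix ι κ R} {w : κ → R} (hw : 0 ≤ w) {i : ι}
    (h : (A *ᵥ w) i < 0) : ∃ j, A i j < 0 ∧ 0 < w j := by
  by_contra! hcon
  refine h.not_ge (Finset.sum_nonneg fun j _ => ?_)
  rcases lt_or_ge (A i j) 0 with hA | hA
  · simp [le_antisymm (hcon j hA) (hw j)]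
  · exact mul_nonneg hA (hw j)

theorem Matrix.mulVec_add_single_one_s10 {ι κ R : Type*} [Fintype κ] [DecidableEq κ]
    [NonAssocSemiring R] (A : Matrix ι κ R) (v : κ → R) (b : ι → R) (j : κ) :
    A *ᵥ (v + Pi.single j 1) + b = A *ᵥ v + b + A.col j := by
  rw [mulVec_add, mulVec_single_one, add_right_comm]

theorem Matrix.nonneg_add_col_of_neg_one {ι κ : Type*} {A : Matrix ι κ ℤ} {v : ι → ℤ}
    (hA : ∀ i j, A i j = -1 ∨ A i j = 0 ∨ A i j = 1)
    (hcol : ∀ j i i', A i j = -1 → A i' j = -1 → i = i') (hv : 0 ≤ v) {i : ι} {j : κ}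
    (hvi : v i = 1) (hAij : A i j = -1) : 0 ≤ v + A.col j := by
  intro i'
  have : 0 ≤ v i' := hv i'
  rcases hA i' j with h | h | h
  · cases hcol j i i' hAij h
    simp [hvi, hAij]
  all_goals simp only [Pi.add_apply, col_apply, h, Pi.zero_apply]; omega

theorem Matrix.sum_nonneg_of_bijOn {ι κ : Type*} {A : Matrix ι κ ℤ}
    (hA : ∀ i j, A i j = -1 ∨ A i j = 0 ∨ A i j = 1)
    (hcol : ∀ j i i', A i j = -1 → A i' j = -1 → i = i') {t : Finset κ} {g : κ → κ}
    (hg : BijOn g t t) (hr : ∀ j ∈ t, ∃ i, A i j = 1 ∧ A i (g j) = -1) (i : ι) :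
    0 ≤ ∑ j ∈ t, A i j := by
  set φ : κ → ℤ := fun j => if A i j = -1 then 1 else 0
  have hperm : ∑ j ∈ t, φ (g j) = ∑ j ∈ t, φ j :=
    Finset.sum_nbij g hg.mapsTo hg.injOn hg.surjOn fun _ _ => rfl
  have hterm : ∀ j ∈ t, φ (g j) - φ j ≤ A i j := by
    intro j hj
    obtain ⟨i', hi'j, hi'g⟩ := hr j hj
    by_cases hgj : A i (g j) = -1
    · cases hcol (g j) i i' hgj hi'g
      simp [φ, hi'j, hgj]
    · rcases hA i j with h | h | h <;> simp [φ, h, hgj]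
  simpa only [Finset.sum_sub_distrib, hperm, sub_self] using Finset.sum_le_sum hterm

theorem Matrix.exists_compensating_column {ι κ : Type*} [Fintype κ] [DecidableEq κ]
    {A : Matrix ι κ ℤ} (hA : ∀ i j, A i j = -1 ∨ A i j = 0 ∨ A i j = 1)
    (hcol : ∀ j i i', A i j = -1 → A i' j = -1 → i = i') {b : ι → ℤ} {x xk : κ → ℤ}
    (hx_le_one : A *ᵥ x + b ≤ 1) (hxk1 : 0 ≤ A *ᵥ xk + b) (hxk2 : A *ᵥ xk + b ≤ 1) {j : κ}
    (hj : Pi.single j 1 ≤ x - xk) (hover : ¬ A *ᵥ (xk + Pi.single j 1) + b ≤ 1) :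
    ∃ j', (∃ i, A i j = 1 ∧ A i j' = -1) ∧
      Pi.single j' 1 ≤ x - xk ∧ 0 ≤ A *ᵥ (xk + Pi.single j' 1) + b := by
  obtain ⟨i, hi⟩ : ∃ i, 1 < (A *ᵥ xk + b) i + A i j := by
    simpa [Pi.le_def, mulVec_add_single_one_s10] using hover
  have hxk1i : 0 ≤ (A *ᵥ xk + b) i := hxk1 i
  have hxk2i : (A *ᵥ xk + b) i ≤ 1 := hxk2 i
  have hAij : A i j = 1 := by rcases hA i j with h | h | h <;> omega
  have hrow : (A *ᵥ xk + b) i = 1 := by omega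
  set w := x - xk - Pi.single j 1 with hw_def
  have hw : 0 ≤ w := sub_nonneg.mpr hj
  have hwi : (A *ᵥ w) i < 0 := by
    have hxi : (A *ᵥ x + b) i ≤ 1 := hx_le_one i
    have : (A *ᵥ w) i = (A *ᵥ x + b) i - (A *ᵥ xk + b) i - A i j := by
      simp only [hw_def, mulVec_sub, mulVec_single_one, Pi.sub_apply, Pi.add_apply, col_apply]
      ring
    omega
  obtain ⟨j', hneg, hpos⟩ := exists_neg_entry_of_mulVec_neg hw hwi
  have hAij' : A i j' = -1 := by rcases hA i j' with h | h | h <;> omega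
  refine ⟨j', ⟨i, hAij, hAij'⟩, ?_, ?_⟩
  · calc Pi.single j' 1 ≤ w := fun k => by
          rcases eq_or_ne k j' with rfl | hk
          · simp only [Pi.single_eq_same]; omega
          · simpa [hk] using hw k
      _ ≤ x - xk := sub_le_self _ (Pi.single_nonneg.2 zero_le_one)
  · rw [mulVec_add_single_one_s10]
    exact nonneg_add_col_of_neg_one hA hcol hxk1 hrow hAij'

theorem stmt_10_general (n m : ℕ) (A : Matrix (Fin n) (Fin m) ℤ)
    (hA : ∀ i j, A i j = -1 ∨ A i j = 0 ∨ A i j = 1)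
    (hcol : ∀ j i i', A i j = -1 → A i' j = -1 → i = i')
    (b c : Fin n → ℤ)
    (hc : ∀ i, c i = 0 ∨ c i = 1)
    (x : Fin m → ℤ)
    (hx2 : A.mulVec x + b ≤ c)
    (xk : Fin m → ℤ) (hxkx : xk ≤ x)
    (hxk1 : 0 ≤ A.mulVec xk + b) (hxk2 : A.mulVec xk + b ≤ 1)
    (hU : ∃ j : Fin m, Pi.single j 1 ≤ x - xk ∧
      0 ≤ A.mulVec (xk + Pi.single j 1) + b)
    (hnone : ∀ j : Fin m, Pi.single j 1 ≤ x - xk →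
      0 ≤ A.mulVec (xk + Pi.single j 1) + b →
      ¬ A.mulVec (xk + Pi.single j 1) + b ≤ 1) :
    ∃ z : Fin m → ℤ, z ≠ 0 ∧ 0 ≤ z ∧ z ≤ x - xk ∧ 0 ≤ A.mulVec z := by
  have hx_le_one : A *ᵥ x + b ≤ 1 := hx2.trans fun i => by rcases hc i with h | h <;> simp [h]
  obtain ⟨t, g, ⟨j₀, hj₀⟩, htU, hg, hgr⟩ := exists_finset_bijOn_of_forall_exists hU
    fun j ⟨hj, hj_nonneg⟩ => by
      obtain ⟨j', hr, hj'⟩ :=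
        exists_compensating_column hA hcol hx_le_one hxk1 hxk2 hj (hnone j hj hj_nonneg)
      exact ⟨j', hj', hr⟩
  have hz : ∀ k, (∑ j ∈ t, Pi.single j (1 : ℤ)) k = if k ∈ t then 1 else 0 := fun k => by
    simp [Finset.sum_apply, Pi.single_apply]
  refine ⟨∑ j ∈ t, Pi.single j 1, fun h => ?_, fun k => ?_, fun k => ?_, fun i => ?_⟩
  · simpa [hz, hj₀] using congrFun h j₀
  · rw [hz]; split_ifs <;> simp
  · rw [hz]
    split_ifs with hk
    · simpa using (htU hk).1 k
    · simpa using hxkx k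
  · simpa [Matrix.mulVec_sum, Finset.sum_apply] using sum_nonneg_of_bijOn hA hcol hg hgr i

theorem stmt_10 (n m : ℕ) (A : Matrix (Fin n) (Fin m) ℤ)
    (hA : ∀ i j, A i j = -1 ∨ A i j = 0 ∨ A i j = 1)
    (hcol : ∀ j i i', A i j = -1 → A i' j = -1 → i = i')
    (b c : Fin n → ℤ)
    (hb : ∀ i, b i = 0 ∨ b i = 1) (hc : ∀ i, c i = 0 ∨ c i = 1)
    (x : Fin m → ℤ) (hx : 0 ≤ x)
    (hx1 : 0 ≤ A.mulVec x + b) (hx2 : A.mulVec x + b ≤ c)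
    (xk : Fin m → ℤ) (hxk0 : 0 ≤ xk) (hxkx : xk ≤ x) (hxkne : xk ≠ x)
    (hxk1 : 0 ≤ A.mulVec xk + b) (hxk2 : A.mulVec xk + b ≤ 1)
    (hU : ∃ j : Fin m, Pi.single j 1 ≤ x - xk ∧
      0 ≤ A.mulVec (xk + Pi.single j 1) + b)
    (hnone : ∀ j : Fin m, Pi.single j 1 ≤ x - xk →
      0 ≤ A.mulVec (xk + Pi.single j 1) + b →
      ¬ A.mulVec (xk + Pi.single j 1) + b ≤ 1) :
    ∃ z : Fin m → ℤ, z ≠ 0 ∧ 0 ≤ z ∧ z ≤ x - xk ∧ 0 ≤ A.mulVec z :=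
  stmt_10_general n m A hA hcol b c hc x hx2 xk hxkx hxk1 hxk2 hU hnone
end
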